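/- (Laplace transform of the bivariate Gaussian density, formula (R1).) For every r > 0, ρ ∈ (−1,1), and (x,y) ∈ ℝ² with (x,y) ≠ (0,0): ∫₀^∞ e^{−rt} · (2πt√(1−ρ²))^{−1} · exp( −B_ρ(x,y)/(2t(1−ρ²)) ) dt = (π√(1−ρ²))^{−1} · ∫₀^∞ cos(u v)/√(1+v²) dv, where u := √( 2 r B_ρ(x,y)/(1−ρ²) ). -/

import Mathlib

open MeasureTheory Real Filter
open scoped Topology

/-- `B_ρ(x,y) = x² − 2ρxy + y²`. -/
noncomputable def Brho (ρ x y : ℝ) : ℝ := x ^ 2 - 2 * ρ * x * y + y ^ 2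

/-!
Substituting `s = r t` turns the Laplace transform into `(2π√(1-ρ²))⁻¹ ∫₀^∞ e^{-s-u²/(4s)} ds/s`,
which is `(π√(1-ρ²))⁻¹ K₀(u)` by Schläfli's integral. To identify this with the improper cosine
integral, integrate by parts once: the new integrand `sin(uv) v (1+v²)^{-3/2}` is absolutely
integrable, and writing `(1+v²)^{-3/2} = (2/√π) ∫₀^∞ √s e^{-(1+v²)s} ds`, Fubini reduces it to the
Gaussian integral `∫₀^∞ v sin(uv) e^{-sv²} dv = (u/4s) √(π/s) e^{-u²/(4s)}`.
-/

open Set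

/-- Schläfli's integral for the modified Bessel function `K₀`; it diverges at `u = 0`, where the
value is junk. -/
noncomputable def besselK0 (u : ℝ) : ℝ := (∫ s in Ioi 0, exp (-s - u ^ 2 / (4 * s)) / s) / 2

theorem integral_cos_mul_mul_exp_neg_mul_sq {s : ℝ} (hs : 0 < s) (u : ℝ) :
    ∫ v : ℝ, cos (u * v) * exp (-s * v ^ 2) = √(π / s) * exp (-(u ^ 2 / (4 * s))) := by
  have hb : (-(s : ℂ)).re < 0 := by simpa using hs
  have h := (integral_re (integrable_cexp_quadratic' hb (Complex.I * u) 0)).trans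
    (congrArg Complex.re (integral_cexp_quadratic hb (Complex.I * u) 0))
  convert h using 1
  · congr 1; ext v
    rw [RCLike.re_to_complex, Complex.exp_re]
    simp [← Complex.ofReal_pow, mul_comm]
  · have : (Complex.I * u) ^ 2 = -(u : ℂ) ^ 2 := by rw [mul_pow, Complex.I_sq]; ring
    rw [this, neg_neg, show (0 : ℂ) - -(u : ℂ) ^ 2 / (4 * -s) = ((-(u ^ 2 / (4 * s)) : ℝ) : ℂ) by
      push_cast; ring, ← Complex.ofReal_exp,
      show (π : ℂ) / s = ((π / s : ℝ) : ℂ) by push_cast; rfl,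
      show (1 / 2 : ℂ) = ((1 / 2 : ℝ) : ℂ) by norm_num, ← Complex.ofReal_cpow (by positivity),
      ← Complex.ofReal_mul, Complex.ofReal_re, sqrt_eq_rpow]

theorem integral_Ioi_cos_mul_mul_exp_neg_mul_sq {s : ℝ} (hs : 0 < s) (u : ℝ) :
    ∫ v in Ioi 0, cos (u * v) * exp (-s * v ^ 2) = √(π / s) * exp (-(u ^ 2 / (4 * s))) / 2 := by
  have h := integral_comp_abs (f := fun v ↦ cos (u * v) * exp (-s * v ^ 2))
  have hcos (v : ℝ) : cos (u * |v|) = cos (u * v) := by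
    rcases abs_choice v with hv | hv <;> simp [hv]
  simp only [sq_abs, hcos] at h
  rw [integral_cos_mul_mul_exp_neg_mul_sq hs] at h
  linarith

theorem integrable_cos_mul_mul_exp_neg_mul_sq {s : ℝ} (hs : 0 < s) (u : ℝ) :
    Integrable fun v : ℝ ↦ cos (u * v) * exp (-s * v ^ 2) :=
  (integrable_exp_neg_mul_sq hs).bdd_mul (f := fun v ↦ cos (u * v)) (c := 1) (by fun_prop)
    (.of_forall fun v ↦ by simpa using abs_cos_le_one (u * v))

theorem integral_Ioi_sin_mul_mul_mul_exp_neg_mul_sq {s : ℝ} (hs : 0 < s) (u : ℝ) :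
    ∫ v in Ioi 0, sin (u * v) * (v * exp (-s * v ^ 2))
      = u / (4 * s) * √(π / s) * exp (-(u ^ 2 / (4 * s))) := by
  have hsin (v : ℝ) : HasDerivAt (fun w ↦ sin (u * w)) (u * cos (u * v)) v := by
    simpa [mul_comm] using ((hasDerivAt_id v).const_mul u).sin
  have hexp (v : ℝ) : HasDerivAt (fun w ↦ -exp (-s * w ^ 2) / (2 * s))
      (v * exp (-s * v ^ 2)) v := by
    refine (((hasDerivAt_pow 2 v).const_mul (-s)).exp.fun_neg.div_const (2 * s)).congr_deriv ?_
    field_simp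
    ring
  have hdecay : Tendsto (fun w ↦ exp (-s * w ^ 2)) atTop (𝓝 0) :=
    tendsto_exp_atBot.comp ((tendsto_pow_atTop two_ne_zero).const_mul_atTop_of_neg (by linarith))
  have hsin_bdd : IsBoundedUnder (· ≤ ·) atTop (norm ∘ fun w ↦ sin (u * w)) :=
    isBoundedUnder_of ⟨1, fun w ↦ by simpa using abs_sin_le_one (u * w)⟩
  rw [integral_Ioi_mul_deriv_eq_deriv_mul (fun v _ ↦ hsin v) (fun v _ ↦ hexp v)
    (a' := 0) (b' := 0)]
  · calc 0 - 0 - ∫ v in Ioi 0, u * cos (u * v) * (-exp (-s * v ^ 2) / (2 * s))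
        = u / (2 * s) * ∫ v in Ioi 0, cos (u * v) * exp (-s * v ^ 2) := by
          rw [sub_zero, zero_sub, ← integral_neg, ← integral_const_mul]
          congr 1; ext v; ring
      _ = _ := by rw [integral_Ioi_cos_mul_mul_exp_neg_mul_sq hs]; ring
  · exact ((integrable_mul_exp_neg_mul_sq hs).bdd_mul (f := fun v ↦ sin (u * v)) (c := 1)
      (by fun_prop) (.of_forall fun v ↦ by simpa using abs_sin_le_one (u * v))).integrableOn
  · exact (((integrable_cos_mul_mul_exp_neg_mul_sq hs u).const_mul (-(u / (2 * s)))).congr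
      (.of_forall fun v ↦ by simp only [Pi.mul_apply]; ring)).integrableOn
  · have hcont : Continuous fun w ↦ sin (u * w) * (-exp (-s * w ^ 2) / (2 * s)) := by fun_prop
    have h0 := (hcont.tendsto 0).mono_left (nhdsWithin_le_nhds (s := Ioi 0))
    rwa [mul_zero, sin_zero, zero_mul] at h0
  · exact isBoundedUnder_le_mul_tendsto_zero hsin_bdd
      (by simpa only [neg_zero, zero_div] using hdecay.neg.div_const (2 * s))

theorem sqrt_pow_three {A : ℝ} (hA : 0 ≤ A) : √A ^ 3 = A * √A := by
  rw [pow_succ, sq_sqrt hA, mul_comm]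

theorem integral_Ioi_sqrt_mul_exp_neg_mul {A : ℝ} (hA : 0 < A) :
    ∫ s in Ioi 0, √s * exp (-(A * s)) = √π / 2 / √A ^ 3 := by
  have h := integral_rpow_mul_exp_neg_mul_Ioi (a := 3 / 2) (by norm_num) hA
  rw [show (3 / 2 : ℝ) = 1 / 2 + 1 by norm_num, Gamma_add_one (by norm_num), Gamma_one_half_eq,
    add_sub_cancel_right] at h
  rw [setIntegral_congr_fun measurableSet_Ioi fun s _ ↦ by rw [sqrt_eq_rpow], h,
    rpow_add (by positivity), rpow_one, ← sqrt_eq_rpow, one_div, sqrt_inv, sqrt_pow_three hA.le]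
  field_simp

theorem integrableOn_sqrt_mul_exp_neg_mul {A : ℝ} (hA : 0 < A) :
    IntegrableOn (fun s ↦ √s * exp (-(A * s))) (Ioi 0) :=
  .of_integral_ne_zero (by rw [integral_Ioi_sqrt_mul_exp_neg_mul hA]; positivity)

theorem abs_div_sqrt_one_add_sq_pow_three_le (v : ℝ) : |v| / √(1 + v ^ 2) ^ 3 ≤ (1 + v ^ 2)⁻¹ := by
  have hA : 0 < 1 + v ^ 2 := by positivity
  rw [sqrt_pow_three hA.le, mul_comm, ← div_div, div_eq_mul_inv]
  exact mul_le_of_le_one_left (by positivity) (div_le_one_of_le₀ (abs_le_sqrt (by linarith))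
    (sqrt_nonneg _))

theorem integrable_div_sqrt_one_add_sq_pow_three :
    Integrable fun v : ℝ ↦ v / √(1 + v ^ 2) ^ 3 := by
  refine integrable_inv_one_add_sq.mono'
    (continuous_id.div (by fun_prop) fun v ↦ by positivity).aestronglyMeasurable
    (.of_forall fun v ↦ ?_)
  rw [norm_div, norm_pow, norm_of_nonneg (sqrt_nonneg _), norm_eq_abs]
  exact abs_div_sqrt_one_add_sq_pow_three_le v

theorem integrable_sin_mul_mul_sqrt_mul_exp_neg (u : ℝ) :
    Integrable (fun p : ℝ × ℝ ↦ sin (u * p.1) * p.1 * (√p.2 * exp (-((1 + p.1 ^ 2) * p.2))))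
      ((volume.restrict (Ioi 0)).prod (volume.restrict (Ioi 0))) := by
  have hA (v : ℝ) : 0 < 1 + v ^ 2 := by positivity
  have hnorm (v s : ℝ) : ‖|v| * (√s * exp (-((1 + v ^ 2) * s)))‖
      = |v| * (√s * exp (-((1 + v ^ 2) * s))) := norm_of_nonneg (by positivity)
  have hdom : Integrable (fun p : ℝ × ℝ ↦ |p.1| * (√p.2 * exp (-((1 + p.1 ^ 2) * p.2))))
      ((volume.restrict (Ioi 0)).prod (volume.restrict (Ioi 0))) := by
    refine (integrable_prod_iff (by fun_prop)).2 ⟨.of_forall fun v ↦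
      (integrableOn_sqrt_mul_exp_neg_mul (hA v)).const_mul |v|, ?_⟩
    simp only [hnorm, integral_const_mul, integral_Ioi_sqrt_mul_exp_neg_mul (hA _)]
    refine (integrable_div_sqrt_one_add_sq_pow_three.norm.const_mul (√π / 2)).integrableOn.congr
      (.of_forall fun v ↦ ?_)
    simp only [norm_div, norm_pow, norm_of_nonneg (sqrt_nonneg _), norm_eq_abs]
    ring
  refine hdom.mono' (by fun_prop) (.of_forall fun p ↦ ?_)
  rw [norm_mul, norm_mul, norm_of_nonneg (by positivity : 0 ≤ √p.2 * _), norm_eq_abs,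
    norm_eq_abs]
  exact mul_le_mul_of_nonneg_right (mul_le_of_le_one_left (abs_nonneg _) (abs_sin_le_one _))
    (by positivity)

theorem integral_Ioi_sin_mul_mul_div_sqrt_one_add_sq_pow_three (u : ℝ) :
    ∫ v in Ioi 0, sin (u * v) * v / √(1 + v ^ 2) ^ 3 = u * besselK0 u := by
  have hv (v : ℝ) : sin (u * v) * v / √(1 + v ^ 2) ^ 3
      = 2 / √π * ∫ s in Ioi 0, sin (u * v) * v * (√s * exp (-((1 + v ^ 2) * s))) := by
    rw [integral_const_mul, integral_Ioi_sqrt_mul_exp_neg_mul (by positivity)]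
    field_simp
  have hs : ∀ s ∈ Ioi (0 : ℝ), ∫ v in Ioi 0, sin (u * v) * v * (√s * exp (-((1 + v ^ 2) * s)))
      = √π * u / 4 * (exp (-s - u ^ 2 / (4 * s)) / s) := by
    intro s (hs : 0 < s)
    have hsplit (v : ℝ) : sin (u * v) * v * (√s * exp (-((1 + v ^ 2) * s)))
        = √s * exp (-s) * (sin (u * v) * (v * exp (-s * v ^ 2))) := by
      rw [show -((1 + v ^ 2) * s) = -s + -s * v ^ 2 by ring, exp_add]
      ring
    simp only [hsplit, integral_const_mul, integral_Ioi_sin_mul_mul_mul_exp_neg_mul_sq hs,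
      sqrt_div pi_pos.le, sub_eq_add_neg, exp_add]
    field_simp
  calc ∫ v in Ioi 0, sin (u * v) * v / √(1 + v ^ 2) ^ 3
      = 2 / √π * ∫ v in Ioi 0, ∫ s in Ioi 0, sin (u * v) * v * (√s * exp (-((1 + v ^ 2) * s))) := by
        simp only [hv, integral_const_mul]
    _ = 2 / √π * ∫ s in Ioi 0, ∫ v in Ioi 0, sin (u * v) * v * (√s * exp (-((1 + v ^ 2) * s))) := by
        rw [integral_integral_swap (integrable_sin_mul_mul_sqrt_mul_exp_neg u)]
    _ = 2 / √π * ∫ s in Ioi 0, √π * u / 4 * (exp (-s - u ^ 2 / (4 * s)) / s) := by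
        rw [setIntegral_congr_fun measurableSet_Ioi hs]
    _ = u * besselK0 u := by
        rw [integral_const_mul, besselK0]
        field_simp
        ring

theorem hasDerivAt_inv_sqrt_one_add_sq (v : ℝ) :
    HasDerivAt (fun w ↦ (√(1 + w ^ 2))⁻¹) (-(v / √(1 + v ^ 2) ^ 3)) v := by
  have hA : 0 < 1 + v ^ 2 := by positivity
  refine ((((hasDerivAt_pow 2 v).const_add 1).sqrt hA.ne').inv (sqrt_pos.2 hA).ne').congr_deriv ?_
  field_simp
  simp

theorem integral_cos_mul_div_sqrt_one_add_sq {u : ℝ} (hu : u ≠ 0) (R : ℝ) :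
    ∫ v in 0..R, cos (u * v) / √(1 + v ^ 2)
      = (√(1 + R ^ 2))⁻¹ * (sin (u * R) / u)
        + (∫ v in 0..R, sin (u * v) * v / √(1 + v ^ 2) ^ 3) / u := by
  have hsin (v : ℝ) : HasDerivAt (fun w ↦ sin (u * w) / u) (cos (u * v)) v := by
    refine (((hasDerivAt_id v).const_mul u).sin.div_const u).congr_deriv ?_
    field_simp
    rfl
  calc ∫ v in 0..R, cos (u * v) / √(1 + v ^ 2)
      = ∫ v in 0..R, (√(1 + v ^ 2))⁻¹ * cos (u * v) := by
        congr 1; ext v; rw [div_eq_inv_mul]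
    _ = (√(1 + R ^ 2))⁻¹ * (sin (u * R) / u) - (√(1 + 0 ^ 2))⁻¹ * (sin (u * 0) / u)
        - ∫ v in 0..R, -(v / √(1 + v ^ 2) ^ 3) * (sin (u * v) / u) :=
        intervalIntegral.integral_mul_deriv_eq_deriv_mul
          (fun v _ ↦ hasDerivAt_inv_sqrt_one_add_sq v) (fun v _ ↦ hsin v)
          ((continuous_id.div (by fun_prop) fun v ↦ by positivity).neg.intervalIntegrable _ _)
          ((by fun_prop : Continuous fun v ↦ cos (u * v)).intervalIntegrable _ _)
    _ = _ := by
        rw [mul_zero, sin_zero, zero_div, mul_zero, sub_zero, sub_eq_add_neg,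
          ← intervalIntegral.integral_neg, ← intervalIntegral.integral_div]
        congr 2
        ext v
        ring

theorem tendsto_integral_cos_mul_div_sqrt_one_add_sq {u : ℝ} (hu : u ≠ 0) :
    Tendsto (fun R ↦ ∫ v in 0..R, cos (u * v) / √(1 + v ^ 2)) atTop (𝓝 (besselK0 u)) := by
  have hboundary : Tendsto (fun R ↦ (√(1 + R ^ 2))⁻¹ * (sin (u * R) / u)) atTop (𝓝 0) := by
    refine Tendsto.zero_mul_isBoundedUnder_le (tendsto_inv_atTop_zero.comp
      (tendsto_sqrt_atTop.comp (tendsto_atTop_add_const_left _ _ (tendsto_pow_atTop two_ne_zero))))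
      (isBoundedUnder_of ⟨1 / |u|, fun R ↦ ?_⟩)
    simp only [Function.comp, norm_div, norm_eq_abs]
    gcongr
    exact abs_sin_le_one _
  have hint : IntegrableOn (fun v ↦ sin (u * v) * v / √(1 + v ^ 2) ^ 3) (Ioi 0) :=
    (integrable_div_sqrt_one_add_sq_pow_three.bdd_mul (f := fun v ↦ sin (u * v)) (c := 1)
      (by fun_prop) (.of_forall fun v ↦ by simpa using abs_sin_le_one (u * v))).integrableOn
      |>.congr_fun (fun v _ ↦ (mul_div_assoc _ _ _).symm) measurableSet_Ioi
  have htail := (intervalIntegral_tendsto_integral_Ioi 0 hint tendsto_id).div_const u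
  rw [integral_Ioi_sin_mul_mul_div_sqrt_one_add_sq_pow_three, mul_div_cancel_left₀ _ hu] at htail
  simpa [integral_cos_mul_div_sqrt_one_add_sq hu] using hboundary.add htail

theorem integral_Ioi_exp_neg_mul_mul_exp_neg_div_div {r c u : ℝ} (hr : 0 < r)
    (hu : u ^ 2 = 4 * r * c) :
    ∫ t in Ioi 0, exp (-(r * t)) * exp (-(c / t)) / t = 2 * besselK0 u := by
  calc ∫ t in Ioi 0, exp (-(r * t)) * exp (-(c / t)) / t
      = ∫ t in Ioi 0, r * (exp (-(r * t) - u ^ 2 / (4 * (r * t))) / (r * t)) :=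
        setIntegral_congr_fun measurableSet_Ioi fun t (ht : 0 < t) ↦ by
          rw [hu, show -(r * t) - 4 * r * c / (4 * (r * t)) = -(r * t) + -(c / t) by
            field_simp; ring, exp_add]
          field_simp
    _ = 2 * besselK0 u := by
        rw [integral_const_mul,
          integral_comp_mul_left_Ioi (fun s ↦ exp (-s - u ^ 2 / (4 * s)) / s) 0 hr, mul_zero,
          smul_eq_mul, mul_inv_cancel_left₀ hr.ne', besselK0]
        ring

theorem Brho_pos {ρ x y : ℝ} (hρ : ρ ^ 2 < 1) (hxy : (x, y) ≠ (0, 0)) : 0 < Brho ρ x y := by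
  have hsq : Brho ρ x y = (x - ρ * y) ^ 2 + (1 - ρ ^ 2) * y ^ 2 := by unfold Brho; ring
  rcases eq_or_ne y 0 with rfl | hy
  · have hx : x ≠ 0 := fun hx ↦ hxy (by rw [hx])
    rw [hsq, mul_zero, sub_zero, zero_pow two_ne_zero, mul_zero, add_zero]
    positivity
  · rw [hsq]
    have : 0 < 1 - ρ ^ 2 := by linarith
    positivity

/-- Laplace transform of the bivariate Gaussian density (formula (R1)):
`∫₀^∞ e^{-rt} (2πt√(1-ρ²))⁻¹ exp(−B_ρ(x,y)/(2t(1-ρ²))) dt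
  = (π√(1-ρ²))⁻¹ K₀(√(2r B_ρ(x,y)/(1-ρ²)))`,
where `K₀(u) = ∫₀^∞ cos(uv)/√(1+v²) dv` is understood as an improper integral. -/
theorem laplace_transform_bivariate_gaussian (r ρ : ℝ) (hr : 0 < r)
    (hρ : ρ ∈ Set.Ioo (-1 : ℝ) 1) (x y : ℝ) (hxy : (x, y) ≠ (0, 0)) :
    ∃ K : ℝ,
      Tendsto (fun R => ∫ v in (0 : ℝ)..R,
          Real.cos (Real.sqrt (2 * r * Brho ρ x y / (1 - ρ ^ 2)) * v) /
            Real.sqrt (1 + v ^ 2)) atTop (𝓝 K) ∧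
      (∫ t in Set.Ioi (0 : ℝ),
          Real.exp (-r * t) * (2 * Real.pi * t * Real.sqrt (1 - ρ ^ 2))⁻¹ *
            Real.exp (-Brho ρ x y / (2 * t * (1 - ρ ^ 2))))
        = (Real.pi * Real.sqrt (1 - ρ ^ 2))⁻¹ * K := by
  have hρ2 : 0 < 1 - ρ ^ 2 := by nlinarith [hρ.1, hρ.2]
  have hB := Brho_pos (by linarith) hxy
  set B := Brho ρ x y
  set u := √(2 * r * B / (1 - ρ ^ 2))
  have hu : u ^ 2 = 4 * r * (B / (2 * (1 - ρ ^ 2))) := by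
    rw [sq_sqrt (by positivity)]
    field_simp
    ring
  refine ⟨besselK0 u, tendsto_integral_cos_mul_div_sqrt_one_add_sq
    (sqrt_pos.2 (by positivity)).ne', ?_⟩
  calc _ = ∫ t in Ioi 0, (2 * π * √(1 - ρ ^ 2))⁻¹ *
          (exp (-(r * t)) * exp (-(B / (2 * (1 - ρ ^ 2)) / t)) / t) :=
        setIntegral_congr_fun measurableSet_Ioi fun t (ht : 0 < t) ↦ by
          rw [neg_mul, neg_div, div_div, mul_comm (2 * (1 - ρ ^ 2))]
          field_simp
    _ = (π * √(1 - ρ ^ 2))⁻¹ * besselK0 u := by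
        rw [integral_const_mul, integral_Ioi_exp_neg_mul_mul_exp_neg_div_div hr hu]
        field_simp
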